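/- arXiv:2009.11998 — 4 statements merged into one kernel-verified Lean document; each statement's English description precedes it below -/
import Mathlib

section
/- For every integer k ≥ 4 and every prime power q with q ≥ k−2, there exists a q-divisible [q² + q − 1, k, q² − (k−3)q]_q linear code. -/
/-!
For `k = m + 3 ≥ 5`, a message is a pair `(f, g)` of polynomials with `deg f < 2` and
`deg g ≤ m`. For every unit `u` the pair `(f u, g u)` is spread over the `q + 1` points of the
projective line (`Option F`, with `none` the point at infinity), a block of weight `q` unless
`f u = g u = 0`, and the coefficient of `X ^ m` in `g` is repeated `q` times. Every weight is
therefore `q (q - δ)`, where `δ` counts the common roots of `f` and `g` in `Fˣ`, plus one if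
`deg g < m`. Counting roots gives `δ ≤ m`, with equality for `f = 0` and `g` a product of `m`
distinct factors `X - u`.

For `k = 4` this only gives `δ ≤ 2`. Instead, `x₀ + t x₁ + s (x₂ + t x₃)` is evaluated at all
`(t, s) ∈ F²` and `x₃` is repeated `q - 1` times. For fixed `t` the line `s ↦ a + s b` has
weight `q - 1` if `b ≠ 0` and `0` or `q` otherwise; summing over `t`, the nonzero weights come
out as `q² - q` or `q²`.
-/

/-- `C` is an `[n, k, d]_q` linear code over `F`: a `k`-dimensional `F`-linear subspace of
`F^n` such that the minimum Hamming weight of a nonzero codeword equals `d`. -/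
def IsLinearCodeWith (F : Type) [Field F] [DecidableEq F] (n k d : ℕ)
    (C : Submodule F (Fin n → F)) : Prop :=
  Module.finrank F C = k ∧
  (∀ c ∈ C, c ≠ 0 → d ≤ hammingNorm c) ∧
  (∃ c ∈ C, c ≠ 0 ∧ hammingNorm c = d)

open Finset Polynomial

section HammingNorm

variable {F ι κ : Type*} [Fintype ι] [Fintype κ] [DecidableEq F] [Zero F]

theorem hammingNorm_comp_equiv (x : ι → F) (e : κ ≃ ι) :
    hammingNorm (x ∘ e) = hammingNorm x := by
  simp only [hammingNorm]
  exact Finset.card_equiv e (by simp)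

theorem hammingNorm_sum_elim (x : ι → F) (y : κ → F) :
    hammingNorm (Sum.elim x y) = hammingNorm x + hammingNorm y := by
  simp only [hammingNorm, Finset.card_filter, Fintype.sum_sum_type]
  rfl

theorem hammingNorm_eq_sum_prod (x : ι × κ → F) :
    hammingNorm x = ∑ i, hammingNorm fun j => x (i, j) := by
  simp only [hammingNorm, Finset.card_filter, Fintype.sum_prod_type]

theorem hammingNorm_const (a : F) :
    hammingNorm (fun _ : ι => a) = if a = 0 then 0 else Fintype.card ι := by
  split_ifs with h <;> simp [hammingNorm, h]

theorem hammingNorm_option (x : Option ι → F) :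
    hammingNorm x = (if x none = 0 then 0 else 1) + hammingNorm (x ∘ some) := by
  simp only [hammingNorm, Finset.card_filter, Fintype.sum_option]
  split_ifs <;> simp_all

end HammingNorm

section LinearCode

variable {F V ι : Type} [Field F] [DecidableEq F] [AddCommGroup V] [Module F V] [Fintype ι]

theorem isLinearCodeWith_range {n d : ℕ} (G : V →ₗ[F] Fin n → F) (hd : 0 < d)
    (hmin : ∀ v ≠ 0, d ≤ hammingNorm (G v)) (hex : ∃ v, hammingNorm (G v) = d) :
    IsLinearCodeWith F n (Module.finrank F V) d (LinearMap.range G) := by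
  have hinj : Function.Injective G := by
    rw [← LinearMap.ker_eq_bot, LinearMap.ker_eq_bot']
    intro v hv
    by_contra h
    simpa [hv] using (hmin v h).trans_lt' hd
  refine ⟨LinearMap.finrank_range_of_inj hinj, ?_, ?_⟩
  · rintro _ ⟨v, rfl⟩ hv
    exact hmin v (by rintro rfl; simp at hv)
  · obtain ⟨v, hv⟩ := hex
    exact ⟨G v, ⟨v, rfl⟩, by rw [← hammingNorm_pos_iff, hv]; exact hd, hv⟩

theorem exists_isLinearCodeWith_of_linearMap {n d m : ℕ} (G : V →ₗ[F] ι → F)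
    (hι : Fintype.card ι = n) (hd : 0 < d) (hmin : ∀ v ≠ 0, d ≤ hammingNorm (G v))
    (hex : ∃ v, hammingNorm (G v) = d) (hdvd : ∀ v, m ∣ hammingNorm (G v)) :
    ∃ C : Submodule F (Fin n → F),
      IsLinearCodeWith F n (Module.finrank F V) d C ∧ ∀ c ∈ C, m ∣ hammingNorm c := by
  let G' := (LinearEquiv.funCongrLeft F F (Fintype.equivFinOfCardEq hι).symm).toLinearMap ∘ₗ G
  have hG' : ∀ v, hammingNorm (G' v) = hammingNorm (G v) := fun v =>
    hammingNorm_comp_equiv (G v) _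
  refine ⟨LinearMap.range G', isLinearCodeWith_range G' hd ?_ ?_, ?_⟩
  · simpa only [hG'] using hmin
  · simpa only [hG'] using hex
  · rintro _ ⟨v, rfl⟩
    rw [hG']
    exact hdvd v

end LinearCode

section Lines

variable {F : Type*} [Field F] [Fintype F] [DecidableEq F]

theorem hammingNorm_id : hammingNorm (fun t : F => t) = Fintype.card F - 1 := by
  simp [hammingNorm, Finset.filter_ne', Finset.card_univ]

theorem hammingNorm_add_mul (a b : F) :
    hammingNorm (fun t : F => a + t * b) =
      if b = 0 then (if a = 0 then 0 else Fintype.card F) else Fintype.card F - 1 := by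
  by_cases hb : b = 0
  · simp [hb, hammingNorm_const]
  · rw [if_neg hb, ← hammingNorm_id]
    exact hammingNorm_comp_equiv id ((Equiv.mulRight₀ b hb).trans (Equiv.addLeft a))

theorem hammingNorm_option_elim (a b : F) :
    hammingNorm (fun o : Option F => o.elim b fun t => a + t * b) =
      if a = 0 ∧ b = 0 then 0 else Fintype.card F := by
  have hq : 0 < Fintype.card F := Fintype.card_pos
  rw [hammingNorm_option]
  simp only [Option.elim_none, Function.comp_def, Option.elim_some, hammingNorm_add_mul]
  by_cases hb : b = 0 <;> by_cases ha : a = 0 <;> simp [ha, hb] <;> omega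

end Lines

section Polynomials

theorem natDegree_le_of_mem_degreeLT_succ {R : Type*} [Semiring R] {n : ℕ} {p : R[X]}
    (hp : p ∈ degreeLT R (n + 1)) : p.natDegree ≤ n :=
  natDegree_le_iff_degree_le.mpr (mem_degreeLE.mp (degreeLT_succ_eq_degreeLE (R := R) ▸ hp))

theorem finrank_degreeLT {R : Type*} [CommRing R] [StrongRankCondition R] (n : ℕ) :
    Module.finrank R (degreeLT R n) = n := by
  simp [(degreeLTEquiv R n).finrank_eq]

variable {F : Type*} [Field F] [Fintype F] [DecidableEq F]

theorem card_units_isRoot_le {p : F[X]} (hp : p ≠ 0) :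
    #{u : Fˣ | p.eval ↑u = 0} ≤ p.natDegree := by
  rw [← Finset.card_map ⟨Units.val, Units.val_injective⟩]
  refine card_le_degree_of_subset_roots fun x hx => ?_
  obtain ⟨u, hu, rfl⟩ := Finset.mem_map.mp hx
  exact (mem_roots hp).mpr (Finset.mem_filter.mp hu).2

theorem card_units_isRoot_add_ite_coeff_le {m : ℕ} {g : F[X]} (hg : g ≠ 0)
    (hdeg : g.natDegree ≤ m) :
    #{u : Fˣ | g.eval ↑u = 0} + (if g.coeff m = 0 then 1 else 0) ≤ m := by
  have hroots := card_units_isRoot_le hg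
  split_ifs with hm
  · have : g.natDegree ≠ m := fun h => hg (leadingCoeff_eq_zero.mp (by rwa [leadingCoeff, h]))
    omega
  · omega

theorem exists_monic_card_units_isRoot_eq {m : ℕ} (hm : m ≤ Fintype.card F - 1) :
    ∃ g : F[X], g.Monic ∧ g.natDegree = m ∧ #{u : Fˣ | g.eval ↑u = 0} = m := by
  obtain ⟨T, -, hT⟩ := Finset.exists_subset_card_eq (s := (univ : Finset Fˣ)) (n := m)
    (by rwa [card_univ, Fintype.card_units])
  refine ⟨∏ u ∈ T, (X - C (u : F)), monic_prod_of_monic _ _ fun u _ => monic_X_sub_C _, ?_, ?_⟩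
  · rw [natDegree_prod_of_monic _ _ fun u _ => monic_X_sub_C _]
    simp [hT]
  · convert hT
    ext u
    simp [eval_prod, Finset.prod_eq_zero_iff, sub_eq_zero, Units.val_inj]

end Polynomials

section PairEvalCode

variable {F : Type} [Field F] [Fintype F] [DecidableEq F]

def pairEvalCode (m : ℕ) :
    (degreeLT F 2 × degreeLT F (m + 1)) →ₗ[F] ((Fˣ × Option F) ⊕ F → F) where
  toFun p := Sum.elim
    (fun x => x.2.elim ((p.2 : F[X]).eval ↑x.1)
      fun t => (p.1 : F[X]).eval ↑x.1 + t * (p.2 : F[X]).eval ↑x.1)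
    fun _ => (p.2 : F[X]).coeff m
  map_add' p p' := by
    ext (⟨u, _ | t⟩ | _) <;> simp [mul_add, add_add_add_comm]
  map_smul' a p := by
    ext (⟨u, _ | t⟩ | _) <;> simp [mul_add, mul_left_comm]

def pairDefect (m : ℕ) (f g : F[X]) : ℕ :=
  #{u : Fˣ | f.eval ↑u = 0 ∧ g.eval ↑u = 0} + if g.coeff m = 0 then 1 else 0

theorem hammingNorm_pairEvalCode_add {m : ℕ} (f : degreeLT F 2) (g : degreeLT F (m + 1)) :
    hammingNorm (pairEvalCode m (f, g)) + Fintype.card F * pairDefect m (f : F[X]) g =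
      Fintype.card F * Fintype.card F := by
  obtain ⟨f, -⟩ := f
  obtain ⟨g, -⟩ := g
  have hq : 0 < Fintype.card F := Fintype.card_pos
  have hsplit := Finset.card_filter_add_card_filter_not (s := (univ : Finset Fˣ))
    fun u => f.eval ↑u = 0 ∧ g.eval ↑u = 0
  rw [card_univ, Fintype.card_units] at hsplit
  simp only [pairEvalCode, LinearMap.coe_mk, AddHom.coe_mk, hammingNorm_sum_elim,
    hammingNorm_eq_sum_prod, hammingNorm_option_elim, hammingNorm_const, Finset.sum_ite,
    sum_const_zero, sum_const, smul_eq_mul, zero_add, pairDefect]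
  generalize Fintype.card F = q at *
  obtain ⟨r, rfl⟩ : ∃ r, q = r + 1 := ⟨q - 1, by omega⟩
  rw [Nat.add_sub_cancel] at hsplit
  subst hsplit
  split_ifs <;> ring

theorem pairDefect_le {m : ℕ} {f g : F[X]} (hm : 2 ≤ m) (hf : f.natDegree ≤ 1)
    (hg : g.natDegree ≤ m) (hfg : ¬(f = 0 ∧ g = 0)) : pairDefect m f g ≤ m := by
  by_cases hf0 : f = 0
  · subst hf0
    simpa [pairDefect] using card_units_isRoot_add_ite_coeff_le (by tauto) hg
  · have hdead : #{u : Fˣ | f.eval ↑u = 0 ∧ g.eval ↑u = 0} ≤ 1 :=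
      calc _ ≤ #{u : Fˣ | f.eval ↑u = 0} :=
            card_le_card (monotone_filter_right _ fun _ _ => And.left)
        _ ≤ 1 := (card_units_isRoot_le hf0).trans hf
    unfold pairDefect
    split_ifs <;> omega

theorem exists_divisible_code_of_two_le {m : ℕ} (hm : 2 ≤ m) (hmq : m < Fintype.card F) :
    ∃ C : Submodule F (Fin (Fintype.card F ^ 2 + Fintype.card F - 1) → F),
      IsLinearCodeWith F _ (m + 3) (Fintype.card F ^ 2 - m * Fintype.card F) C ∧
        ∀ c ∈ C, Fintype.card F ∣ hammingNorm c := by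
  have hweight := hammingNorm_pairEvalCode_add (F := F) (m := m)
  have hcard : Fintype.card ((Fˣ × Option F) ⊕ F) =
      Fintype.card F ^ 2 + Fintype.card F - 1 := by
    simp only [Fintype.card_sum, Fintype.card_prod, Fintype.card_units, Fintype.card_option]
    obtain ⟨r, hr⟩ : ∃ r, Fintype.card F = r + 1 := ⟨_, (Nat.succ_pred_eq_of_pos hmq.pos).symm⟩
    rw [hr, Nat.add_sub_cancel]
    ring_nf
    omega
  rw [show m + 3 = Module.finrank F (degreeLT F 2 × degreeLT F (m + 1)) by
    rw [Module.finrank_prod, finrank_degreeLT, finrank_degreeLT]; ring]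
  refine exists_isLinearCodeWith_of_linearMap (pairEvalCode m) hcard ?_ ?_ ?_
    fun ⟨f, g⟩ => (Nat.dvd_add_left (dvd_mul_right _ _)).mp ((hweight f g).symm ▸ dvd_mul_right _ _)
  · rw [sq]
    exact Nat.sub_pos_of_lt (Nat.mul_lt_mul_of_pos_right hmq (by omega))
  · rintro ⟨f, g⟩ hp
    have hdefect := pairDefect_le hm (natDegree_le_of_mem_degreeLT_succ f.2)
      (natDegree_le_of_mem_degreeLT_succ g.2) (by simpa [Prod.ext_iff] using hp)
    have := hweight f g
    have := Nat.mul_le_mul_left (Fintype.card F) hdefect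
    rw [sq, mul_comm m]
    omega
  · obtain ⟨g, hmonic, hdeg, hroots⟩ :=
      exists_monic_card_units_isRoot_eq (F := F) (by omega : m ≤ Fintype.card F - 1)
    have hg : g ∈ degreeLT F (m + 1) := by
      rw [mem_degreeLT, degree_eq_natDegree hmonic.ne_zero, hdeg]
      exact_mod_cast Nat.lt_succ_self m
    refine ⟨(0, ⟨g, hg⟩), ?_⟩
    have hdefect : pairDefect m 0 g = m := by
      simp [pairDefect, hroots, ← hdeg, hmonic.coeff_natDegree]
    have := hweight 0 ⟨g, hg⟩
    simp only [Submodule.coe_zero, hdefect] at this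
    rw [sq, mul_comm m]
    omega

end PairEvalCode

section BilinearEvalCode

variable {F : Type} [Field F] [Fintype F] [DecidableEq F]

def bilinearEvalCode : (Fin 4 → F) →ₗ[F] ((F × F) ⊕ Fˣ → F) where
  toFun x := Sum.elim (fun p => (x 0 + p.1 * x 1) + p.2 * (x 2 + p.1 * x 3)) fun _ => x 3
  map_add' x y := by
    ext (⟨t, s⟩ | _) <;> simp; ring
  map_smul' a x := by
    ext (⟨t, s⟩ | _) <;> simp; ring

theorem hammingNorm_bilinearEvalCode_eq_or {x : Fin 4 → F} (hx : x ≠ 0) :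
    hammingNorm (bilinearEvalCode x) = Fintype.card F ^ 2 - Fintype.card F ∨
      hammingNorm (bilinearEvalCode x) = Fintype.card F ^ 2 := by
  have hq : 0 < Fintype.card F := Fintype.card_pos
  simp only [bilinearEvalCode, LinearMap.coe_mk, AddHom.coe_mk, hammingNorm_sum_elim,
    hammingNorm_eq_sum_prod, hammingNorm_add_mul, hammingNorm_const, Fintype.card_units]
  by_cases h3 : x 3 = 0
  · by_cases h2 : x 2 = 0
    · have h01 : ¬(x 0 = 0 ∧ x 1 = 0) := fun h => hx (by ext i; fin_cases i <;> simp [h, h2, h3])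
      have hsum : (∑ t : F, if x 0 + t * x 1 = 0 then 0 else Fintype.card F) =
          Fintype.card F * hammingNorm (fun t : F => x 0 + t * x 1) := by
        simp [hammingNorm, Finset.sum_ite, mul_comm]
      simp only [h2, h3, mul_zero, add_zero, if_true, hsum, hammingNorm_add_mul]
      generalize Fintype.card F = q at *
      split_ifs with h1 h0
      · exact absurd ⟨h0, h1⟩ h01
      · right; rw [sq]
      · left; rw [Nat.mul_sub_one, sq]
    · simp only [h3, mul_zero, add_zero, h2, if_false, if_true, sum_const, card_univ, smul_eq_mul]
      left
      rw [Nat.mul_sub_one, sq]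
  · obtain ⟨t₀, ht₀⟩ : ∃ t₀ : F, ∀ t, x 2 + t * x 3 = 0 ↔ t = t₀ :=
      ⟨-x 2 / x 3, fun t => by
        constructor <;> intro h <;> field_simp at h ⊢ <;> linear_combination h⟩
    rw [Fintype.sum_eq_add_sum_compl t₀, if_pos ((ht₀ t₀).mpr rfl),
      Finset.sum_congr rfl fun t ht =>
        if_neg (mt (ht₀ t).mp (Finset.mem_compl.mp ht ∘ mem_singleton.mpr)),
      sum_const, card_compl, card_singleton, smul_eq_mul, if_neg h3]
    generalize Fintype.card F = q at *
    obtain ⟨r, rfl⟩ : ∃ r, q = r + 1 := ⟨q - 1, by omega⟩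
    simp only [Nat.add_sub_cancel]
    split_ifs
    · left; rw [zero_add, sq, Nat.mul_succ, Nat.add_sub_cancel]; ring
    · right; ring

theorem exists_divisible_code_four :
    ∃ C : Submodule F (Fin (Fintype.card F ^ 2 + Fintype.card F - 1) → F),
      IsLinearCodeWith F _ 4 (Fintype.card F ^ 2 - Fintype.card F) C ∧
        ∀ c ∈ C, Fintype.card F ∣ hammingNorm c := by
  have hq : 1 < Fintype.card F := Fintype.one_lt_card
  have hcard : Fintype.card ((F × F) ⊕ Fˣ) = Fintype.card F ^ 2 + Fintype.card F - 1 := by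
    simp only [Fintype.card_sum, Fintype.card_prod, Fintype.card_units, sq]
    omega
  have hpos : 0 < Fintype.card F ^ 2 - Fintype.card F := by
    rw [sq]
    exact Nat.sub_pos_of_lt (by nlinarith)
  have hdvd : Fintype.card F ∣ Fintype.card F ^ 2 - Fintype.card F :=
    Nat.dvd_sub (dvd_pow_self _ two_ne_zero) dvd_rfl
  have hwitness : hammingNorm (bilinearEvalCode (Pi.single 2 1 : Fin 4 → F)) =
      Fintype.card F ^ 2 - Fintype.card F := by
    simp [bilinearEvalCode, hammingNorm_sum_elim, hammingNorm_eq_sum_prod, hammingNorm_const,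
      hammingNorm_id, sq, Nat.mul_sub_one]
  simpa using exists_isLinearCodeWith_of_linearMap bilinearEvalCode hcard hpos
    (fun x hx => (hammingNorm_bilinearEvalCode_eq_or hx).elim ge_of_eq fun h => h ▸ Nat.sub_le _ _)
    ⟨_, hwitness⟩ fun x => by
      rcases eq_or_ne x 0 with rfl | hx
      · simp
      · rcases hammingNorm_bilinearEvalCode_eq_or hx with h | h <;> rw [h]
        exacts [hdvd, dvd_pow_self _ two_ne_zero]

end BilinearEvalCode

theorem statement4_general (k q : ℕ) (hk : 4 ≤ k) (hkq : k - 2 ≤ q)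
    (F : Type) [Field F] [Fintype F] [DecidableEq F] (hF : Fintype.card F = q) :
    ∃ C : Submodule F (Fin (q ^ 2 + q - 1) → F),
      IsLinearCodeWith F (q ^ 2 + q - 1) k (q ^ 2 - (k - 3) * q) C ∧
      ∀ c ∈ C, q ∣ hammingNorm c := by
  subst hF
  obtain rfl | hk5 := hk.eq_or_lt
  · simpa using exists_divisible_code_four (F := F)
  · obtain ⟨m, rfl⟩ : ∃ m, k = m + 3 := ⟨k - 3, by omega⟩
    simpa using exists_divisible_code_of_two_le (F := F) (m := m) (by omega) (by omega)

/-- For every integer `k ≥ 4` and every prime power `q ≥ k - 2`, there exists a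
`q`-divisible `[q² + q - 1, k, q² - (k-3)q]_q` code. -/
theorem statement4 (k q : ℕ) (hk : 4 ≤ k) (hq : IsPrimePow q) (hkq : k - 2 ≤ q)
    (F : Type) [Field F] [Fintype F] [DecidableEq F] (hF : Fintype.card F = q) :
    ∃ C : Submodule F (Fin (q ^ 2 + q - 1) → F),
      IsLinearCodeWith F (q ^ 2 + q - 1) k (q ^ 2 - (k - 3) * q) C ∧
      ∀ c ∈ C, q ∣ hammingNorm c :=
  statement4_general k q hk hkq F hF
end

section
/- For every integer k ≥ 6 and every prime power q with q ≥ k−2, there exists a q^{k−3}-divisible [3q^{k−1} − 2q^{k−2} + 1 + (k−5)·θ_{k−1}, k, (k−2)q^{k−1} − 5q^{k−2} + 2q^{k−3}]_q linear code, where θ_{k−1} = (q^k − 1)/(q − 1). -/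
open Finset Module Polynomial
open scoped LinearAlgebra.Projectivization

noncomputable section

theorem Finset.sum_le_card_erase_nsmul {ι M : Type*} [DecidableEq ι] [AddCommMonoid M]
    [Preorder M] [AddLeftMono M] {s : Finset ι} {f : ι → M} {b : M} (hf : ∀ i ∈ s, f i ≤ b)
    {j : ι} (hj : j ∈ s) (h0 : f j = 0) :
    ∑ i ∈ s, f i ≤ #(s.erase j) • b := by
  rw [← add_sum_erase s f hj, h0, zero_add]
  exact sum_le_card_nsmul _ _ _ fun i hi => hf i (mem_of_mem_erase hi)

theorem LinearMap.finrank_ker_of_surjective {F V W : Type*} [Field F] [AddCommGroup V]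
    [Module F V] [FiniteDimensional F V] [AddCommGroup W] [Module F W] {ψ : V →ₗ[F] W}
    (hψ : Function.Surjective ψ) : finrank F (ker ψ) = finrank F V - finrank F W := by
  rw [← ψ.finrank_range_add_finrank_ker, range_eq_top.2 hψ, finrank_top, Nat.add_sub_cancel_left]

theorem not_ker_le_ker_of_apply {F V W : Type*} [Field F] [AddCommGroup V] [Module F V]
    [AddCommGroup W] [Module F W] {ψ : V →ₗ[F] W} {φ : Module.Dual F V} {v : V} (hψ : ψ v = 0)
    (hφ : φ v ≠ 0) : ¬ LinearMap.ker ψ ≤ LinearMap.ker φ :=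
  fun h => hφ (h hψ)

-- Roots on the projective line: `coeff 0 = 0` is the root `0` and `coeff n = 0` the root `∞`.
theorem Polynomial.card_units_isRoot_add_le {F : Type*} [Field F] [Fintype F] [DecidableEq F]
    {p : F[X]} (hp : p ≠ 0) {n : ℕ} (hn : p.natDegree ≤ n) :
    #{l : Fˣ | p.IsRoot l} + (if p.coeff 0 = 0 then 1 else 0) + (if p.coeff n = 0 then 1 else 0)
      ≤ n := by
  have hroots : #{x : F | p.IsRoot x} ≤ p.natDegree :=
    card_le_degree_of_subset_roots fun x hx => by simpa [mem_roots hp] using hx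
  have hsplit := card_filter_add_card_filter_not (s := {x : F | p.IsRoot x}) (· ≠ 0)
  have hunits : #{l : Fˣ | p.IsRoot l} = #{x ∈ {x : F | p.IsRoot x} | x ≠ 0} := by
    rw [← card_map ⟨Units.val, Units.val_injective⟩]
    congr 1
    ext x
    simp only [mem_map, mem_filter, mem_univ, true_and, Function.Embedding.coeFn_mk]
    exact ⟨fun ⟨l, hl, hx⟩ => hx ▸ ⟨hl, l.ne_zero⟩, fun ⟨hx, hx0⟩ => ⟨Units.mk0 x hx0, hx, rfl⟩⟩
  have hzero : #{x ∈ {x : F | p.IsRoot x} | ¬x ≠ 0} = if p.coeff 0 = 0 then 1 else 0 := by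
    simp only [not_not, filter_eq', mem_filter, mem_univ, true_and, IsRoot.def,
      coeff_zero_eq_eval_zero]
    split_ifs <;> simp
  have htop : p.natDegree + (if p.coeff n = 0 then 1 else 0) ≤ n := by
    split_ifs with h
    · have : p.natDegree ≠ n := fun hd => leadingCoeff_ne_zero.2 hp (by rw [leadingCoeff, hd, h])
      omega
    · omega
  omega

namespace Projectivization

instance {K V : Type*} [DivisionRing K] [AddCommGroup V] [Module K V] [Finite V] :
    Fintype (ℙ K V) := Fintype.ofFinite _

variable {F V : Type*} [Field F] [Fintype F] [AddCommGroup V] [Module F V] [Fintype V]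

theorem card_filter_rep_mul [DecidableEq V] (P : V → Prop) [DecidablePred P]
    (hP : ∀ (c : F) (v : V), c ≠ 0 → (P (c • v) ↔ P v)) :
    #{p : ℙ F V | P p.rep} * (Fintype.card F - 1) = #{v : V | v ≠ 0 ∧ P v} := by
  classical
  have hrep (u : {v : V // v ≠ 0}) : P (mk' F u).rep ↔ P u := by
    obtain ⟨a, ha⟩ := exists_smul_eq_mk_rep F (u : V) u.2
    rw [mk'_eq_mk, ← ha, Units.smul_def, hP _ _ a.ne_zero]
  calc #{p : ℙ F V | P p.rep} * (Fintype.card F - 1)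
      = #{x : ℙ F V × Fˣ | P x.1.rep} := by
        rw [← Fintype.card_units, ← card_univ (α := Fˣ), ← card_product, ← filter_product_left,
          univ_product_univ]
    _ = #{u : {v : V // v ≠ 0} | P u} :=
        (card_equiv (nonZeroEquivProjectivizationProdUnits F V) fun u => by
          simp only [mem_filter, mem_univ, true_and]; exact (hrep u).symm).symm
    _ = #{v : V | v ≠ 0 ∧ P v} := by
        rw [← card_map (Function.Embedding.subtype _)]
        congr 1
        ext v
        simp [and_comm]

end Projectivization

section Counting

open Projectivization

variable {F V W : Type*} [Field F] [AddCommGroup V] [Module F V] [Fintype V]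
  [AddCommGroup W] [Module F W] [DecidableEq W]

section

variable [Fintype F]

theorem LinearMap.card_filter_apply_eq_zero (ψ : V →ₗ[F] W) :
    #{v : V | ψ v = 0} = Fintype.card F ^ finrank F (LinearMap.ker ψ) := by
  classical
  rw [← card_eq_pow_finrank, ← Fintype.card_coe]
  exact Fintype.card_congr (Equiv.subtypeEquivRight fun v => by simp)

theorem card_filter_rep_ker_mul (ψ : V →ₗ[F] W) :
    (#{p : ℙ F V | ψ p.rep = 0} : ℤ) * (Fintype.card F - 1) =
      Fintype.card F ^ finrank F (LinearMap.ker ψ) - 1 := by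
  classical
  have h := card_filter_rep_mul (F := F) (fun v => ψ v = 0) fun c v hc => by simp [hc]
  rw [← filter_filter, filter_ne', filter_erase, card_erase_of_mem (by simp),
    LinearMap.card_filter_apply_eq_zero] at h
  have hq := Fintype.card_pos (α := F)
  zify [hq, Nat.one_le_pow _ _ hq] at h
  exact h

end

variable [DecidableEq F]

def kerPointsOff (ψ : V →ₗ[F] W) (φ : Module.Dual F V) : ℕ :=
  #{p : ℙ F V | φ p.rep ≠ 0 ∧ ψ p.rep = 0}

theorem kerPointsOff_of_le {ψ : V →ₗ[F] W} {φ : Module.Dual F V}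
    (h : LinearMap.ker ψ ≤ LinearMap.ker φ) : kerPointsOff ψ φ = 0 := by
  simp only [kerPointsOff, card_eq_zero, filter_eq_empty_iff, mem_univ, true_implies, not_and]
  exact fun p hp hψ => hp (h hψ)

variable [Fintype F]

theorem Module.Dual.card_filter_apply_ne_zero {φ : Module.Dual F V} (hφ : φ ≠ 0) :
    #{v : V | φ v ≠ 0} = (Fintype.card F - 1) * Fintype.card F ^ (finrank F V - 1) := by
  have hrank := φ.finrank_ker_add_one_of_ne_zero hφ
  have hsplit := card_filter_add_card_filter_not (s := univ) (fun v : V => φ v = 0)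
  rw [card_univ, card_eq_pow_finrank (K := F), LinearMap.card_filter_apply_eq_zero, ← hrank,
    pow_succ] at hsplit
  rw [← hrank, Nat.add_sub_cancel, Nat.sub_one_mul, mul_comm (Fintype.card F), ← hsplit,
    Nat.add_sub_cancel_left]

theorem kerPointsOff_of_not_le {ψ : V →ₗ[F] W} {φ : Module.Dual F V}
    (h : ¬ LinearMap.ker ψ ≤ LinearMap.ker φ) :
    kerPointsOff ψ φ = Fintype.card F ^ (finrank F (LinearMap.ker ψ) - 1) := by
  classical
  have hq : 0 < Fintype.card F - 1 := Nat.sub_pos_of_lt Fintype.one_lt_card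
  have hφ : φ.domRestrict (LinearMap.ker ψ) ≠ 0 := by
    contrapose! h
    exact fun v hv => LinearMap.congr_fun h ⟨v, hv⟩
  refine Nat.eq_of_mul_eq_mul_right hq ?_
  rw [kerPointsOff, card_filter_rep_mul (fun v => φ v ≠ 0 ∧ ψ v = 0) fun c v hc => by simp [hc],
    mul_comm, ← Module.Dual.card_filter_apply_ne_zero hφ, ← card_map (Function.Embedding.subtype _)]
  congr 1
  ext v
  simp only [mem_filter, mem_univ, true_and, mem_map, Function.Embedding.subtype_apply]
  constructor
  · rintro ⟨-, hφv, hψv⟩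
    exact ⟨⟨v, hψv⟩, hφv, rfl⟩
  · rintro ⟨w, hw, rfl⟩
    exact ⟨fun h0 => hw (by simp [h0]), hw, w.2⟩

theorem kerPointsOff_eq_zero_or (ψ : V →ₗ[F] W) (φ : Module.Dual F V) :
    kerPointsOff ψ φ = 0 ∨ kerPointsOff ψ φ = Fintype.card F ^ (finrank F (LinearMap.ker ψ) - 1) :=
  (em (LinearMap.ker ψ ≤ LinearMap.ker φ)).imp kerPointsOff_of_le kerPointsOff_of_not_le

theorem pow_dvd_kerPointsOff (ψ : V →ₗ[F] W) (φ : Module.Dual F V) :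
    Fintype.card F ^ (finrank F (LinearMap.ker ψ) - 1) ∣ kerPointsOff ψ φ := by
  rcases kerPointsOff_eq_zero_or ψ φ with h | h <;> simp [h]

theorem card_filter_rep_ne_zero {φ : Module.Dual F V} (hφ : φ ≠ 0) :
    #{p : ℙ F V | φ p.rep ≠ 0} = Fintype.card F ^ (finrank F V - 1) := by
  have h := kerPointsOff_of_not_le (ψ := (0 : V →ₗ[F] F)) (φ := φ) (by
    rwa [LinearMap.ker_zero, top_le_iff, LinearMap.ker_eq_top])
  rw [LinearMap.ker_zero, finrank_top] at h
  simpa [kerPointsOff] using h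

end Counting

def systemWeight {F V ι : Type*} [Field F] [DecidableEq F] [AddCommGroup V] [Module F V]
    [Fintype ι] (P : ι → V) (μ : ι → ℕ) (φ : Module.Dual F V) : ℕ :=
  ∑ i with φ (P i) ≠ 0, μ i

theorem exists_isLinearCodeWith_of_systemWeight {F : Type} [Field F] [DecidableEq F]
    {V ι : Type*} [AddCommGroup V] [Module F V] [FiniteDimensional F V] [Fintype ι] (P : ι → V)
    (μ : ι → ℕ) {n d Δ : ℕ} (hn : ∑ i, μ i = n) (hd : 0 < d)
    (hmin : ∀ φ : Module.Dual F V, φ ≠ 0 → d ≤ systemWeight P μ φ)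
    (hatt : ∃ φ : Module.Dual F V, systemWeight P μ φ = d)
    (hdvd : ∀ φ : Module.Dual F V, Δ ∣ systemWeight P μ φ) :
    ∃ C : Submodule F (Fin n → F),
      IsLinearCodeWith F n (finrank F V) d C ∧ ∀ c ∈ C, Δ ∣ hammingNorm c := by
  have hcard : Fintype.card (Σ i, Fin (μ i)) = n := by simp [hn]
  let e := Fintype.equivFinOfCardEq hcard
  let G : Module.Dual F V →ₗ[F] Fin n → F :=
    LinearMap.pi fun j => Module.Dual.eval F V (P (e.symm j).1)
  have hG (φ : Module.Dual F V) : hammingNorm (G φ) = systemWeight P μ φ := by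
    calc #{j | G φ j ≠ 0} = #{s : Σ i, Fin (μ i) | φ (P s.1) ≠ 0} :=
          card_equiv e.symm fun j => by simp only [mem_filter, mem_univ, true_and]; rfl
      _ = #(({i | φ (P i) ≠ 0} : Finset ι).sigma fun i => univ) := by
          congr 1
          ext s
          simp
      _ = systemWeight P μ φ := by simp [card_sigma, systemWeight]
  have hinj : Function.Injective G := by
    rw [← LinearMap.ker_eq_bot, LinearMap.ker_eq_bot']
    intro φ hφ
    by_contra hne
    have := hmin φ hne
    rw [← hG, hφ, hammingNorm_zero] at this
    omega
  refine ⟨LinearMap.range G, ⟨?_, ?_, ?_⟩, ?_⟩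
  · rw [LinearMap.finrank_range_of_inj hinj, Subspace.dual_finrank_eq]
  · rintro _ ⟨φ, rfl⟩ hc
    exact hG φ ▸ hmin φ fun h => hc (by rw [h, map_zero])
  · obtain ⟨φ, hφ⟩ := hatt
    refine ⟨G φ, ⟨φ, rfl⟩, fun h => ?_, hG φ ▸ hφ⟩
    rw [← hφ, ← hG, h, hammingNorm_zero] at hd
    exact hd.false
  · rintro _ ⟨φ, rfl⟩
    exact hG φ ▸ hdvd φ

namespace DivisibleCode

section

variable {F : Type*} [Field F] {m : ℕ}

/-- The paper's `(x₀, x₁, x₂, …, x_{k-1})` is `(x₀, x₁, ∑ x_{i+2} X^i)` here, with `m = k - 2`. -/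
abbrev Ambient (F : Type*) [Field F] (m : ℕ) := F × F × degreeLT F m

def fstL : Module.Dual F (Ambient F m) := LinearMap.fst F F _

def sndL : Module.Dual F (Ambient F m) := LinearMap.fst F F _ ∘ₗ LinearMap.snd F F _

def polyL : Ambient F m →ₗ[F] F[X] :=
  (degreeLT F m).subtype ∘ₗ LinearMap.snd F F _ ∘ₗ LinearMap.snd F F _

def headL : Ambient F m →ₗ[F] F × F := fstL.prod sndL

def hyperplaneL : Fin 4 → Module.Dual F (Ambient F m) :=
  ![fstL, sndL, lcoeff F 0 ∘ₗ polyL, lcoeff F (m - 1) ∘ₗ polyL]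

def pencilL (l : F) : Ambient F m →ₗ[F] F × F := (fstL + l • sndL).prod (leval l ∘ₗ polyL)

@[simp] lemma fstL_apply (v : Ambient F m) : fstL v = v.1 := rfl
@[simp] lemma sndL_apply (v : Ambient F m) : sndL v = v.2.1 := rfl
@[simp] lemma polyL_apply (v : Ambient F m) : polyL v = v.2.2 := rfl
@[simp] lemma headL_apply (v : Ambient F m) : headL v = (v.1, v.2.1) := rfl
@[simp] lemma pencilL_apply (l : F) (v : Ambient F m) :
    pencilL l v = (v.1 + l * v.2.1, (v.2.2 : F[X]).eval l) := rfl

lemma const_mem_degreeLT (hm : 1 ≤ m) (c : F) : C c ∈ degreeLT F m :=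
  mem_degreeLT.2 <| (degree_C_le).trans_lt (by exact_mod_cast hm)

lemma one_mem_degreeLT (hm : 1 ≤ m) : (1 : F[X]) ∈ degreeLT F m :=
  C_1 (R := F) ▸ const_mem_degreeLT hm 1

lemma monomial_mem_degreeLT (hm : 1 ≤ m) (c : F) : monomial (m - 1) c ∈ degreeLT F m :=
  mem_degreeLT.2 <| (degree_monomial_le _ _).trans_lt (by exact_mod_cast (by omega : m - 1 < m))

lemma X_sub_C_mem_degreeLT (hm : 2 ≤ m) (c : F) : X - C c ∈ degreeLT F m :=
  mem_degreeLT.2 <| by rw [degree_X_sub_C]; exact_mod_cast hm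

def ofPoly (g : F[X]) (hg : g ∈ degreeLT F m) : Ambient F m := (0, 0, ⟨g, hg⟩)

lemma ofPoly_mem_ker_headL (g : F[X]) (hg : g ∈ degreeLT F m) :
    ofPoly g hg ∈ LinearMap.ker headL := by
  simp [ofPoly]

lemma finrank_ambient : finrank F (Ambient F m) = m + 2 := by
  rw [finrank_prod, finrank_prod, finrank_self, (degreeLTEquiv F m).finrank_eq, finrank_fin_fun]
  ring

lemma finrank_ker_headL : finrank F (LinearMap.ker (headL : Ambient F m →ₗ[F] F × F)) = m := by
  rw [LinearMap.finrank_ker_of_surjective (fun w => ⟨(w.1, w.2, 0), rfl⟩), finrank_ambient,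
    finrank_prod, finrank_self]
  omega

lemma finrank_ker_pencilL (hm : 1 ≤ m) (l : F) :
    finrank F (LinearMap.ker (pencilL l : Ambient F m →ₗ[F] F × F)) = m := by
  rw [LinearMap.finrank_ker_of_surjective (fun w => ⟨(w.1, 0, ⟨C w.2, const_mem_degreeLT hm _⟩),
    by simp [pencilL]⟩), finrank_ambient, finrank_prod, finrank_self]
  omega

lemma finrank_ker_hyperplaneL (hm : 1 ≤ m) (i : Fin 4) :
    finrank F (LinearMap.ker (hyperplaneL i : Module.Dual F (Ambient F m))) = m + 1 := by
  have hsurj : Function.Surjective (hyperplaneL i : Module.Dual F (Ambient F m)) := by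
    intro c
    fin_cases i
    · exact ⟨(c, 0, 0), rfl⟩
    · exact ⟨(0, c, 0), rfl⟩
    · exact ⟨(0, 0, ⟨C c, const_mem_degreeLT hm c⟩), by simp [hyperplaneL]⟩
    · exact ⟨(0, 0, ⟨monomial (m - 1) c, monomial_mem_degreeLT hm c⟩), by simp [hyperplaneL]⟩
  rw [LinearMap.finrank_ker_of_surjective hsurj, finrank_ambient, finrank_self]
  omega

lemma exists_ker_le_of_ker_headL_le {φ : Module.Dual F (Ambient F m)}
    (h : LinearMap.ker headL ≤ LinearMap.ker φ) :
    (∃ i, LinearMap.ker (hyperplaneL i) ≤ LinearMap.ker φ) ∨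
      ∃ l : Fˣ, LinearMap.ker (pencilL (l : F)) ≤ LinearMap.ker φ := by
  set α := φ (1, 0, 0)
  set β := φ (0, 1, 0)
  have hφ (v : Ambient F m) : φ v = v.1 * α + v.2.1 * β := by
    have hv : v = v.1 • ((1, 0, 0) : Ambient F m) + v.2.1 • (0, 1, 0) + ofPoly _ v.2.2.2 := by
      ext <;> simp [ofPoly]
    rw [hv, map_add, map_add, map_smul, map_smul, h (ofPoly_mem_ker_headL _ _)]
    simp [ofPoly, α, β]
  by_cases hβ : β = 0
  · refine .inl ⟨0, fun v hv => ?_⟩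
    simp_all [hyperplaneL]
  by_cases hα : α = 0
  · refine .inl ⟨1, fun v hv => ?_⟩
    simp_all [hyperplaneL]
  right
  refine ⟨Units.mk0 (β / α) (div_ne_zero hβ hα), fun v hv => ?_⟩
  simp only [LinearMap.mem_ker, pencilL_apply, Units.val_mk0, Prod.mk_eq_zero] at hv ⊢
  rw [hφ]
  field_simp at hv
  linear_combination hv.1

def minWeightFunctional : Module.Dual F (Ambient F m) := hyperplaneL 2 + hyperplaneL 3

lemma minWeightFunctional_ofPoly (g : F[X]) (hg : g ∈ degreeLT F m) :
    minWeightFunctional (ofPoly g hg) = g.coeff 0 + g.coeff (m - 1) := rfl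

lemma ker_headL_not_le_ker_minWeightFunctional (hm : 2 ≤ m) :
    ¬ LinearMap.ker headL ≤ LinearMap.ker (minWeightFunctional : Module.Dual F (Ambient F m)) :=
  not_ker_le_ker_of_apply (v := ofPoly 1 (one_mem_degreeLT (by omega))) (by simp [ofPoly])
    (by simp [minWeightFunctional_ofPoly, coeff_one, show m - 1 ≠ 0 by omega])

lemma ker_hyperplaneL_not_le_ker_minWeightFunctional (hm : 2 ≤ m) (i : Fin 4) :
    ¬ LinearMap.ker (hyperplaneL i) ≤
      LinearMap.ker (minWeightFunctional : Module.Dual F (Ambient F m)) := by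
  have hm1 : m - 1 ≠ 0 := by omega
  set one : Ambient F m := ofPoly 1 (one_mem_degreeLT (by omega))
  have hone : minWeightFunctional one = 1 := by
    simp [one, minWeightFunctional_ofPoly, coeff_one, hm1]
  fin_cases i
  · exact not_ker_le_ker_of_apply (v := one) (by simp [hyperplaneL, one, ofPoly]) (by simp [hone])
  · exact not_ker_le_ker_of_apply (v := one) (by simp [hyperplaneL, one, ofPoly]) (by simp [hone])
  · exact not_ker_le_ker_of_apply (v := ofPoly _ (monomial_mem_degreeLT (by omega) 1))
      (by simp [hyperplaneL, ofPoly, coeff_monomial, hm1])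
      (by simp [minWeightFunctional_ofPoly, coeff_monomial, hm1])
  · exact not_ker_le_ker_of_apply (v := one) (by simp [hyperplaneL, one, ofPoly, coeff_one, hm1])
      (by simp [hone])

lemma ker_pencilL_not_le_ker_minWeightFunctional (hm : 3 ≤ m) {l : F} (hl : l ≠ 0) :
    ¬ LinearMap.ker (pencilL l) ≤
      LinearMap.ker (minWeightFunctional : Module.Dual F (Ambient F m)) := by
  refine not_ker_le_ker_of_apply (v := ofPoly (X - C l) (X_sub_C_mem_degreeLT (by omega) _))
    (by simp [ofPoly]) ?_
  rw [minWeightFunctional_ofPoly]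
  simpa [coeff_X, coeff_C, show m - 1 ≠ 0 by omega, show 1 ≠ m - 1 by omega] using hl

section Multiplicity

variable [DecidableEq F]

lemma card_hyperplaneL_eq (v : Ambient F m) :
    #{i | hyperplaneL i v = 0} = (if v.1 = 0 then 1 else 0) + (if v.2.1 = 0 then 1 else 0) +
      (if (v.2.2 : F[X]).coeff 0 = 0 then 1 else 0) +
      (if (v.2.2 : F[X]).coeff (m - 1) = 0 then 1 else 0) := by
  rw [card_filter, Fin.sum_univ_four]
  rfl

variable [Fintype F]

lemma card_add_card_le_of_headL_eq_zero {v : Ambient F m} (hv : v ≠ 0) (h : headL v = 0) :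
    #{i | hyperplaneL i v = 0} + #{l : Fˣ | pencilL (l : F) v = 0} ≤ m + 1 := by
  obtain ⟨a, b, g⟩ := v
  obtain ⟨rfl, rfl⟩ : a = 0 ∧ b = 0 := by simpa [headL] using h
  have hg : (g : F[X]) ≠ 0 := fun hg => hv (Prod.ext rfl (Prod.ext rfl (Subtype.ext hg)))
  have hdeg : (g : F[X]).natDegree < m := (natDegree_lt_iff_degree_lt hg).2 (mem_degreeLT.1 g.2)
  have hroots := card_units_isRoot_add_le hg (n := m - 1) (by omega)
  have hpencil : #{l : Fˣ | pencilL (l : F) ((0, 0, g) : Ambient F m) = 0} =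
      #{l : Fˣ | (g : F[X]).IsRoot l} := by
    congr 1
    ext l
    simp [pencilL]
  rw [card_hyperplaneL_eq, hpencil]
  simp only [↓reduceIte]
  omega

lemma card_add_card_le_of_headL_ne_zero (hm : 3 ≤ m) {v : Ambient F m} (h : headL v ≠ 0) :
    #{i | hyperplaneL i v = 0} + #{l : Fˣ | pencilL (l : F) v = 0} ≤ m := by
  obtain ⟨a, b, g⟩ := v
  -- `{a = 0}`, `{b = 0}` and the `S_l` containing `v` correspond to the roots `0`, `∞`, `l` of `L`.
  set L : F[X] := C b * X + C a
  have hL0 : L.coeff 0 = a := by simp [L]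
  have hL1 : L.coeff 1 = b := by simp [L]
  have hL : L ≠ 0 := fun hL => h (by simp [headL, ← hL0, ← hL1, hL])
  have hroots := card_units_isRoot_add_le hL (n := 1) (natDegree_linear_le)
  have hpencil : #{l : Fˣ | pencilL (l : F) ((a, b, g) : Ambient F m) = 0} ≤
      #{l : Fˣ | L.IsRoot l} := by
    refine card_le_card (monotone_filter_right _ fun l _ hl => ?_)
    simp only [pencilL_apply, Prod.mk_eq_zero] at hl
    simp only [L, IsRoot.def, eval_add, eval_mul, eval_C, eval_X]
    linear_combination hl.1
  rw [card_hyperplaneL_eq]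
  rw [hL0, hL1] at hroots
  split_ifs at hroots ⊢ <;> omega

def mult (m : ℕ) (v : Ambient F m) : ℤ :=
  m + (if headL v = 0 then 1 else 0) - ∑ i, (if hyperplaneL i v = 0 then 1 else 0)
    - ∑ l : Fˣ, (if pencilL (l : F) v = 0 then 1 else 0)

lemma mult_nonneg (hm : 3 ≤ m) {v : Ambient F m} (hv : v ≠ 0) : 0 ≤ mult m v := by
  simp only [mult, sum_boole]
  split_ifs with h
  · have := card_add_card_le_of_headL_eq_zero hv h
    omega
  · have := card_add_card_le_of_headL_ne_zero hm h
    omega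

end Multiplicity

section Weights

variable [Fintype F] [DecidableEq F]

local notation "q" => Fintype.card F

instance : Fintype (degreeLT F m) :=
  Fintype.ofEquiv _ (degreeLTEquiv F m).toEquiv.symm

lemma sum_mult_rep (s : Finset (ℙ F (Ambient F m))) :
    ∑ p ∈ s, mult m p.rep = m * #s + #{p ∈ s | headL p.rep = 0}
      - ∑ i, (#{p ∈ s | hyperplaneL i p.rep = 0} : ℤ)
      - ∑ l : Fˣ, (#{p ∈ s | pencilL (l : F) p.rep = 0} : ℤ) := by
  simp only [mult, sum_add_distrib, sum_sub_distrib, sum_const, nsmul_eq_mul]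
  rw [sum_comm (s := s), sum_comm (s := s)]
  simp [sum_boole, mul_comm]

def pointMult (p : ℙ F (Ambient F m)) : ℕ := (mult m p.rep).toNat

lemma systemWeight_pointMult (hm : 3 ≤ m) (φ : Module.Dual F (Ambient F m)) :
    (systemWeight Projectivization.rep pointMult φ : ℤ) =
      ∑ p : ℙ F (Ambient F m) with φ p.rep ≠ 0, mult m p.rep := by
  rw [systemWeight, Nat.cast_sum]
  exact sum_congr rfl fun p _ => Int.toNat_of_nonneg (mult_nonneg hm p.rep_nonzero)

lemma systemWeight_pointMult_eq (hm : 3 ≤ m) {φ : Module.Dual F (Ambient F m)} (hφ : φ ≠ 0) :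
    (systemWeight Projectivization.rep pointMult φ : ℤ) =
      m * q ^ (m + 1) + kerPointsOff headL φ - ∑ i, (kerPointsOff (hyperplaneL i) φ : ℤ)
        - ∑ l : Fˣ, (kerPointsOff (pencilL (l : F)) φ : ℤ) := by
  rw [systemWeight_pointMult hm, sum_mult_rep, card_filter_rep_ne_zero hφ, finrank_ambient]
  simp [filter_filter, kerPointsOff]

lemma kerPointsOff_hyperplaneL_le (hm : 1 ≤ m) (i : Fin 4) (φ : Module.Dual F (Ambient F m)) :
    kerPointsOff (hyperplaneL i) φ ≤ q ^ m := by
  rcases kerPointsOff_eq_zero_or (hyperplaneL i) φ with h | h <;>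
    simp [h, finrank_ker_hyperplaneL hm]

lemma kerPointsOff_pencilL_le (hm : 1 ≤ m) (l : F) (φ : Module.Dual F (Ambient F m)) :
    kerPointsOff (pencilL l) φ ≤ q ^ (m - 1) := by
  rcases kerPointsOff_eq_zero_or (pencilL l) φ with h | h <;>
    simp [h, finrank_ker_pencilL hm]

lemma sum_kerPointsOff_hyperplaneL_le (hm : 1 ≤ m) (φ : Module.Dual F (Ambient F m)) :
    ∑ i, kerPointsOff (hyperplaneL i) φ ≤ 4 * q ^ m := by
  simpa using sum_le_card_nsmul univ _ _ fun i _ => kerPointsOff_hyperplaneL_le hm i φ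

lemma sum_kerPointsOff_hyperplaneL_le_of_le (hm : 1 ≤ m) {φ : Module.Dual F (Ambient F m)}
    {j : Fin 4} (h : LinearMap.ker (hyperplaneL j) ≤ LinearMap.ker φ) :
    ∑ i, kerPointsOff (hyperplaneL i) φ ≤ 3 * q ^ m := by
  simpa using sum_le_card_erase_nsmul (fun i _ => kerPointsOff_hyperplaneL_le hm i φ)
    (mem_univ j) (kerPointsOff_of_le h)

lemma sum_kerPointsOff_pencilL_le (hm : 1 ≤ m) (φ : Module.Dual F (Ambient F m)) :
    ∑ l : Fˣ, kerPointsOff (pencilL (l : F)) φ ≤ (q - 1) * q ^ (m - 1) := by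
  simpa [Fintype.card_units] using
    sum_le_card_nsmul (univ : Finset Fˣ) _ _ fun l _ => kerPointsOff_pencilL_le hm (l : F) φ

lemma sum_kerPointsOff_pencilL_le_of_le (hm : 1 ≤ m) {φ : Module.Dual F (Ambient F m)} {l₀ : Fˣ}
    (h : LinearMap.ker (pencilL (l₀ : F)) ≤ LinearMap.ker φ) :
    ∑ l : Fˣ, kerPointsOff (pencilL (l : F)) φ ≤ (q - 2) * q ^ (m - 1) := by
  simpa [Fintype.card_units, Nat.sub_sub] using sum_le_card_erase_nsmul
    (f := fun l : Fˣ => kerPointsOff (pencilL (l : F)) φ)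
    (fun l _ => kerPointsOff_pencilL_le hm (l : F) φ) (mem_univ l₀) (kerPointsOff_of_le h)

theorem le_systemWeight (hm : 3 ≤ m) {φ : Module.Dual F (Ambient F m)} (hφ : φ ≠ 0) :
    (m * q ^ (m + 1) - 5 * q ^ m + 2 * q ^ (m - 1) : ℤ) ≤
      systemWeight Projectivization.rep pointMult φ := by
  have hq : 2 ≤ q := Fintype.one_lt_card
  have hqm : (q : ℤ) ^ m = q * q ^ (m - 1) := by rw [← pow_succ']; congr 1; omega
  have hH := sum_kerPointsOff_hyperplaneL_le (by omega) φ
  have hS := sum_kerPointsOff_pencilL_le (by omega) φ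
  zify [hq, (by omega : 1 ≤ q)] at hH hS
  rw [systemWeight_pointMult_eq hm hφ, pow_succ, hqm]
  by_cases hle : LinearMap.ker headL ≤ LinearMap.ker φ
  · rw [kerPointsOff_of_le hle, Nat.cast_zero]
    rcases exists_ker_le_of_ker_headL_le hle with ⟨j, h⟩ | ⟨l, h⟩
    · have hH' := sum_kerPointsOff_hyperplaneL_le_of_le (by omega) h
      zify at hH'
      nlinarith [pow_pos (show (0 : ℤ) < q by omega) (m - 1)]
    · have hS' := sum_kerPointsOff_pencilL_le_of_le (by omega) h
      zify [hq] at hS'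
      nlinarith
  · rw [kerPointsOff_of_not_le hle, finrank_ker_headL]
    push_cast
    nlinarith

theorem pow_dvd_systemWeight (hm : 3 ≤ m) (φ : Module.Dual F (Ambient F m)) :
    q ^ (m - 1) ∣ systemWeight Projectivization.rep pointMult φ := by
  by_cases hφ : φ = 0
  · simp [systemWeight, hφ]
  have hdvd {ψ : Ambient F m →ₗ[F] F × F} (hψ : finrank F (LinearMap.ker ψ) = m) :
      (q ^ (m - 1) : ℤ) ∣ kerPointsOff ψ φ := by
    exact_mod_cast hψ ▸ pow_dvd_kerPointsOff ψ φ
  have hdvd_hyp (i : Fin 4) : (q ^ (m - 1) : ℤ) ∣ kerPointsOff (hyperplaneL i) φ := by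
    have := pow_dvd_kerPointsOff (hyperplaneL i) φ
    rw [finrank_ker_hyperplaneL (by omega), Nat.add_sub_cancel] at this
    exact_mod_cast (pow_dvd_pow _ (Nat.sub_le m 1)).trans this
  rw [← Int.natCast_dvd_natCast, systemWeight_pointMult_eq hm hφ]
  push_cast
  refine dvd_sub (dvd_sub (dvd_add ?_ (hdvd finrank_ker_headL)) (dvd_sum fun i _ => hdvd_hyp i))
    (dvd_sum fun l _ => hdvd (finrank_ker_pencilL (by omega) _))
  exact (pow_dvd_pow _ (by omega)).mul_left _

theorem systemWeight_minWeightFunctional (hm : 3 ≤ m) :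
    (systemWeight Projectivization.rep pointMult (minWeightFunctional (F := F) (m := m)) : ℤ) =
      m * q ^ (m + 1) - 5 * q ^ m + 2 * q ^ (m - 1) := by
  have hφ : (minWeightFunctional : Module.Dual F (Ambient F m)) ≠ 0 := fun h =>
    ker_headL_not_le_ker_minWeightFunctional (F := F) (m := m) (by omega) (by simp [h])
  have hhead : kerPointsOff headL (minWeightFunctional : Module.Dual F (Ambient F m)) =
      q ^ (m - 1) := by
    rw [kerPointsOff_of_not_le
        (ker_headL_not_le_ker_minWeightFunctional (F := F) (m := m) (by omega)),
      finrank_ker_headL]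
  have hhyp (i : Fin 4) :
      kerPointsOff (hyperplaneL i) (minWeightFunctional : Module.Dual F (Ambient F m)) = q ^ m := by
    rw [kerPointsOff_of_not_le
        (ker_hyperplaneL_not_le_ker_minWeightFunctional (F := F) (m := m) (by omega) i),
      finrank_ker_hyperplaneL (show 1 ≤ m by omega), Nat.add_sub_cancel]
  have hpen (l : Fˣ) :
      kerPointsOff (pencilL (l : F)) (minWeightFunctional : Module.Dual F (Ambient F m)) =
        q ^ (m - 1) := by
    rw [kerPointsOff_of_not_le
        (ker_pencilL_not_le_ker_minWeightFunctional (F := F) (m := m) hm l.ne_zero),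
      finrank_ker_pencilL (show 1 ≤ m by omega)]
  have hqm : (q : ℤ) ^ m = q * q ^ (m - 1) := by rw [← pow_succ']; congr 1; omega
  rw [systemWeight_pointMult_eq hm hφ, hhead]
  simp only [hhyp, hpen, sum_const, card_univ, Fintype.card_units, Fintype.card_fin, nsmul_eq_mul,
    Nat.cast_sub Fintype.card_pos]
  push_cast
  linear_combination hqm

theorem sub_one_mul_sum_pointMult (hm : 3 ≤ m) :
    ((q : ℤ) - 1) * ∑ p : ℙ F (Ambient F m), (pointMult p : ℤ) =
      m * (q ^ (m + 2) - 1) + (q ^ m - 1) - 4 * (q ^ (m + 1) - 1) - (q - 1) * (q ^ m - 1) := by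
  have hall := card_filter_rep_ker_mul (0 : Ambient F m →ₗ[F] F)
  rw [LinearMap.ker_zero, finrank_top, finrank_ambient] at hall
  simp only [LinearMap.zero_apply, filter_true] at hall
  have hhead := card_filter_rep_ker_mul (headL : Ambient F m →ₗ[F] F × F)
  rw [finrank_ker_headL] at hhead
  have hH : (∑ i, (#{p : ℙ F (Ambient F m) | hyperplaneL i p.rep = 0} : ℤ)) * (q - 1) =
      4 * (q ^ (m + 1) - 1) := by
    simp only [sum_mul, card_filter_rep_ker_mul, finrank_ker_hyperplaneL (show 1 ≤ m by omega),
      sum_const, card_univ, Fintype.card_fin, nsmul_eq_mul]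
    ring
  have hS : (∑ l : Fˣ, (#{p : ℙ F (Ambient F m) | pencilL (l : F) p.rep = 0} : ℤ)) * (q - 1) =
      (q - 1) * (q ^ m - 1) := by
    simp only [sum_mul, card_filter_rep_ker_mul, finrank_ker_pencilL (show 1 ≤ m by omega),
      sum_const, card_univ, Fintype.card_units, nsmul_eq_mul, Nat.cast_sub Fintype.card_pos,
      Nat.cast_one]
  have hcast : ∑ p : ℙ F (Ambient F m), (pointMult p : ℤ) =
      ∑ p : ℙ F (Ambient F m), mult m p.rep :=
    sum_congr rfl fun p _ => Int.toNat_of_nonneg (mult_nonneg hm p.rep_nonzero)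
  rw [hcast, sum_mult_rep]
  linear_combination (m : ℤ) * hall + hhead - hH - hS

theorem sum_pointMult (hm : 3 ≤ m) :
    ∑ p : ℙ F (Ambient F m), pointMult p = 3 * q ^ (m + 1) - 2 * q ^ m
      + 1 + (m - 3) * ((q ^ (m + 2) - 1) / (q - 1)) := by
  have hq : 1 ≤ q := Fintype.card_pos
  have hq1 : (q : ℤ) - 1 ≠ 0 := by have : 1 < q := Fintype.one_lt_card; omega
  have hle : 2 * q ^ m ≤ 3 * q ^ (m + 1) := by
    rw [pow_succ]; nlinarith [Nat.one_le_pow m q hq]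
  have hθ : (q ^ (m + 2) - 1) / (q - 1) * (q - 1) = q ^ (m + 2) - 1 :=
    Nat.div_mul_cancel (by simpa using Nat.sub_dvd_pow_sub_pow q 1 (m + 2))
  generalize (q ^ (m + 2) - 1) / (q - 1) = θ at hθ ⊢
  zify [hq, Nat.one_le_pow (m + 2) q hq] at hθ
  apply Nat.cast_injective (R := ℤ)
  apply mul_left_cancel₀ hq1
  push_cast [hle, hm]
  rw [sub_one_mul_sum_pointMult hm]
  linear_combination (3 - (m : ℤ)) * hθ

end Weights

end

section

variable {F : Type} [Field F] [Fintype F] [DecidableEq F] {m : ℕ}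

local notation "q" => Fintype.card F

theorem exists_isLinearCodeWith (hm : 3 ≤ m) :
    ∃ C : Submodule F
        (Fin (3 * q ^ (m + 1) - 2 * q ^ m + 1 + (m - 3) * ((q ^ (m + 2) - 1) / (q - 1))) → F),
      IsLinearCodeWith F _ (m + 2) (m * q ^ (m + 1) - 5 * q ^ m + 2 * q ^ (m - 1)) C ∧
      ∀ c ∈ C, q ^ (m - 1) ∣ hammingNorm c := by
  have hq : 2 ≤ q := Fintype.one_lt_card
  have hle : 5 * q ^ m ≤ m * q ^ (m + 1) :=
    calc 5 * q ^ m ≤ (m * q) * q ^ m := Nat.mul_le_mul_right _ (by nlinarith)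
      _ = m * q ^ (m + 1) := by ring
  have hd : ((m * q ^ (m + 1) - 5 * q ^ m + 2 * q ^ (m - 1) : ℕ) : ℤ) =
      m * q ^ (m + 1) - 5 * q ^ m + 2 * q ^ (m - 1) := by
    push_cast [hle]; ring
  have := exists_isLinearCodeWith_of_systemWeight Projectivization.rep pointMult (sum_pointMult hm)
    (d := m * q ^ (m + 1) - 5 * q ^ m + 2 * q ^ (m - 1))
    (by have := Fintype.card_pos (α := F); positivity)
    (fun φ hφ => by exact_mod_cast hd ▸ le_systemWeight hm hφ)
    ⟨minWeightFunctional, by exact_mod_cast (systemWeight_minWeightFunctional hm).trans hd.symm⟩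
    (pow_dvd_systemWeight hm)
  rwa [finrank_ambient] at this

end

end DivisibleCode

end

theorem statement9_general (k q : ℕ) (hk : 6 ≤ k)
    (F : Type) [Field F] [Fintype F] [DecidableEq F] (hF : Fintype.card F = q) :
    ∃ C : Submodule F
        (Fin (3 * q ^ (k - 1) - 2 * q ^ (k - 2) + 1 + (k - 5) * ((q ^ k - 1) / (q - 1))) → F),
      IsLinearCodeWith F
        (3 * q ^ (k - 1) - 2 * q ^ (k - 2) + 1 + (k - 5) * ((q ^ k - 1) / (q - 1))) k
        ((k - 2) * q ^ (k - 1) - 5 * q ^ (k - 2) + 2 * q ^ (k - 3)) C ∧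
      ∀ c ∈ C, q ^ (k - 3) ∣ hammingNorm c := by
  subst hF
  obtain ⟨m, rfl⟩ : ∃ m, k = m + 2 := ⟨k - 2, by omega⟩
  rw [show m + 2 - 1 = m + 1 by omega, show m + 2 - 2 = m by omega,
    show m + 2 - 3 = m - 1 by omega, show m + 2 - 5 = m - 3 by omega]
  exact DivisibleCode.exists_isLinearCodeWith (by omega)

/-- For every integer `k ≥ 6` and every prime power `q ≥ k - 2`, there exists a
`q^{k-3}`-divisible `[3q^{k-1} - 2q^{k-2} + 1 + (k-5)θ_{k-1}, k,
(k-2)q^{k-1} - 5q^{k-2} + 2q^{k-3}]_q` code, where `θ_{k-1} = (q^k - 1)/(q - 1)`. -/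
theorem statement9 (k q : ℕ) (hk : 6 ≤ k) (hq : IsPrimePow q) (hkq : k - 2 ≤ q)
    (F : Type) [Field F] [Fintype F] [DecidableEq F] (hF : Fintype.card F = q) :
    ∃ C : Submodule F
        (Fin (3 * q ^ (k - 1) - 2 * q ^ (k - 2) + 1 + (k - 5) * ((q ^ k - 1) / (q - 1))) → F),
      IsLinearCodeWith F
        (3 * q ^ (k - 1) - 2 * q ^ (k - 2) + 1 + (k - 5) * ((q ^ k - 1) / (q - 1))) k
        ((k - 2) * q ^ (k - 1) - 5 * q ^ (k - 2) + 2 * q ^ (k - 3)) C ∧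
      ∀ c ∈ C, q ^ (k - 3) ∣ hammingNorm c :=
  statement9_general k q hk F hF
end

section
/- For all integers k ≥ 6 and q ≥ k−2, the inequality (q^{k−2} − 1)/(q − 1) − C(q, k−4) − C(q, k−3) ≥ q − 1 holds, where C(a,b) denotes the binomial coefficient. -/
/-- For all integers `k ≥ 6` and `q ≥ k - 2`, one has
`(q^{k-2} - 1)/(q - 1) - C(q, k-4) - C(q, k-3) ≥ q - 1`. -/
theorem statement12 (k q : ℕ) (hk : 6 ≤ k) (hkq : k - 2 ≤ q) :
    (q : ℤ) - 1 ≤ ((q : ℤ) ^ (k - 2) - 1) / ((q : ℤ) - 1)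
      - (Nat.choose q (k - 4) : ℤ) - (Nat.choose q (k - 3) : ℤ) := by
  obtain ⟨n, hn⟩ : ∃ n, k - 2 = n + 2 := ⟨k - 4, by omega⟩
  have hn2 : 2 ≤ n := by omega
  have hk4 : k - 4 = n := by omega
  have hk3 : k - 3 = n + 1 := by omega
  have hq4 : 4 ≤ q := by omega
  have hq1 : (q : ℤ) - 1 ≠ 0 := by
    have : (4 : ℤ) ≤ (q : ℤ) := by exact_mod_cast hq4
    omega
  rw [hn, hk4, hk3]
  have hdiv : ((q : ℤ) ^ (n + 2) - 1) / ((q : ℤ) - 1)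
      = ∑ i ∈ Finset.range (n + 2), (q : ℤ) ^ i := by
    rw [← geom_sum_mul (q : ℤ) (n + 2), Int.mul_ediv_cancel _ hq1]
  rw [hdiv, Finset.sum_range_succ, Finset.sum_range_succ]
  have hC1 : (Nat.choose q n : ℤ) ≤ (q : ℤ) ^ n := by
    exact_mod_cast Nat.choose_le_pow q n
  have hC2 : (Nat.choose q (n + 1) : ℤ) ≤ (q : ℤ) ^ (n + 1) := by
    exact_mod_cast Nat.choose_le_pow q (n + 1)
  have hlow : (q : ℤ) - 1 ≤ ∑ i ∈ Finset.range n, (q : ℤ) ^ i := by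
    have h1 : (q : ℤ) ^ 1 ≤ ∑ i ∈ Finset.range n, (q : ℤ) ^ i := by
      apply Finset.single_le_sum (f := fun i => (q : ℤ) ^ i)
      · intro i _
        positivity
      · simp only [Finset.mem_range]; omega
    have h2 : (q : ℤ) - 1 ≤ (q : ℤ) ^ 1 := by
      rw [pow_one]; omega
    exact le_trans h2 h1
  linarith
end

section
/- For all integers k ≥ 6 and q ≥ k−2, the inequality (q^{k−2} − 1)/(q − 1) − C(q−1, k−3) − 2·C(q−1, k−4) − C(q−1, k−5) ≥ q − 1 holds, where C(a,b) denotes the binomial coefficient. -/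
/-- For all integers `k ≥ 6` and `q ≥ k - 2`, one has
`(q^{k-2} - 1)/(q - 1) - C(q-1, k-3) - 2·C(q-1, k-4) - C(q-1, k-5) ≥ q - 1`. -/
theorem statement13 (k q : ℕ) (hk : 6 ≤ k) (hkq : k - 2 ≤ q) :
    (q : ℤ) - 1 ≤ ((q : ℤ) ^ (k - 2) - 1) / ((q : ℤ) - 1)
      - (Nat.choose (q - 1) (k - 3) : ℤ) - 2 * (Nat.choose (q - 1) (k - 4) : ℤ)
      - (Nat.choose (q - 1) (k - 5) : ℤ) := by
  obtain ⟨a, rfl⟩ : ∃ a, k = a + 6 := ⟨k - 6, by omega⟩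
  obtain ⟨c, rfl⟩ : ∃ c, q = c + 2 := ⟨q - 2, by omega⟩
  have hca : a + 2 ≤ c := by omega
  have e2 : a + 6 - 2 = a + 4 := by omega
  have e3 : a + 6 - 3 = a + 3 := by omega
  have e4 : a + 6 - 4 = a + 2 := by omega
  have e5 : a + 6 - 5 = a + 1 := by omega
  have e1 : c + 2 - 1 = c + 1 := by omega
  rw [e2, e3, e4, e5, e1]
  -- geometric sum
  set S : ℕ := ∑ i ∈ Finset.range (a + 4), (c + 2) ^ i with hS
  have hdiv : (((c : ℤ) + 2) ^ (a + 4) - 1) / (((c : ℤ) + 2) - 1) = (S : ℤ) := by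
    have hg := geom_sum_mul ((c : ℤ) + 2) (a + 4)
    rw [← hg]
    have hne : ((c : ℤ) + 2) - 1 ≠ 0 := by push_cast; omega
    rw [Int.mul_ediv_cancel _ hne]
    push_cast [hS]
    rfl
  have hcast : ((c + 2 : ℕ) : ℤ) = (c : ℤ) + 2 := by push_cast; ring
  rw [hcast, hdiv]
  -- Pascal
  have pascal : (c + 1).choose (a + 3) + 2 * (c + 1).choose (a + 2)
      + (c + 1).choose (a + 1) = (c + 3).choose (a + 3) := by
    have A : (c + 3).choose (a + 3) = (c + 2).choose (a + 2) + (c + 2).choose (a + 3) :=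
      Nat.choose_succ_succ (c + 2) (a + 2)
    have B : (c + 2).choose (a + 2) = (c + 1).choose (a + 1) + (c + 1).choose (a + 2) :=
      Nat.choose_succ_succ (c + 1) (a + 1)
    have C : (c + 2).choose (a + 3) = (c + 1).choose (a + 2) + (c + 1).choose (a + 3) :=
      Nat.choose_succ_succ (c + 1) (a + 2)
    omega
  -- bound the binomial coefficient
  have hC : (c + 3).choose (a + 3) ≤ (c + 2) ^ (a + 3) := by
    calc (c + 3).choose (a + 3) ≤ (c + 3).descFactorial (a + 3) :=
          Nat.choose_le_descFactorial _ _
      _ = (c + 3) * ((c + 2) * (c + 1).descFactorial (a + 1)) := by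
          rw [show c + 3 = (c + 2) + 1 from rfl, show a + 3 = (a + 2) + 1 from rfl,
            Nat.succ_descFactorial_succ, show c + 2 = (c + 1) + 1 from rfl,
            show a + 2 = (a + 1) + 1 from rfl, Nat.succ_descFactorial_succ]
      _ ≤ (c + 3) * ((c + 2) * ((c + 1) * (c + 1) ^ a)) := by
          gcongr
          calc (c + 1).descFactorial (a + 1) ≤ (c + 1) ^ (a + 1) :=
                Nat.descFactorial_le_pow _ _
            _ = (c + 1) * (c + 1) ^ a := by ring
      _ = ((c + 3) * (c + 1)) * ((c + 2) * (c + 1) ^ a) := by ring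
      _ ≤ ((c + 2) * (c + 2)) * ((c + 2) * (c + 2) ^ a) := by
          have hpow : (c + 1) ^ a ≤ (c + 2) ^ a := Nat.pow_le_pow_left (by omega) a
          exact Nat.mul_le_mul (by nlinarith) (Nat.mul_le_mul_left _ hpow)
      _ = (c + 2) * ((c + 2) * ((c + 2) * (c + 2) ^ a)) := by ring
      _ = (c + 2) ^ (a + 3) := by ring
  -- lower bound for the geometric sum
  have hSge : c + 1 + (c + 3).choose (a + 3) ≤ S := by
    have hpeel : S = (∑ i ∈ Finset.range (a + 3), (c + 2) ^ i) + (c + 2) ^ (a + 3) :=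
      Finset.sum_range_succ _ _
    have hsub : (∑ i ∈ Finset.range 2, (c + 2) ^ i) ≤
        ∑ i ∈ Finset.range (a + 3), (c + 2) ^ i :=
      Finset.sum_le_sum_of_subset (Finset.range_subset_range.mpr (by omega))
    have h2 : (∑ i ∈ Finset.range 2, (c + 2) ^ i) = 1 + (c + 2) := by
      simp [Finset.sum_range_succ]
    omega
  -- conclude over ℤ
  have : ((c : ℤ) + 2) - 1 + ((c + 1).choose (a + 3) + 2 * (c + 1).choose (a + 2)
      + (c + 1).choose (a + 1) : ℕ) ≤ (S : ℤ) := by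
    rw [pascal]
    push_cast
    have := hSge
    push_cast at this ⊢
    linarith
  push_cast at this ⊢
  linarith
end
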